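/- arXiv:2512.06505 — 3 statements merged into one kernel-verified Lean document; each statement's English description precedes it below -/
import Mathlib

section
/- For S₀ in the continuation region (0 < S₀ ≤ S̄_C), the AmPO call premium C₀ is nonincreasing in the amortization rate q; specifically, ∂C₀/∂q = (C₀/(σ² ᾱ))·log((α_C−1)S₀/(α_C K)) ≤ 0. -/
/-!
Write `C₀ = P ∘ α_C`, where `P(a) = K/(a-1) · u(a)^a` with `u(a) = (a-1)S₀/(aK)`. Differentiating
`log P(a) = log K - log (a-1) + a log u(a)` gives `-1/(a-1) + log u + a/(a(a-1)) = log u`, so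
`P' = P log u`. The chain rule with `α_C'(q) = 1/(σ² ᾱ)` gives the formula; its sign is that of
`log u`, which is nonpositive exactly when `S₀ ≤ S̄_C`.
-/

open Real

noncomputable def perpetualCallPremium (K S a : ℝ) : ℝ :=
  K / (a - 1) * ((a - 1) * S / (a * K)) ^ a

theorem hasDerivAt_perpetualCallPremium {K S a : ℝ} (hK : 0 < K) (hS : 0 < S) (ha : 1 < a) :
    HasDerivAt (perpetualCallPremium K S)
      (perpetualCallPremium K S a * log ((a - 1) * S / (a * K))) a := by
  have ha₀ : a ≠ 0 := by positivity
  have ha₁ : a - 1 ≠ 0 := sub_ne_zero.mpr ha.ne'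
  have hu : 0 < (a - 1) * S / (a * K) := by
    have : 0 < a - 1 := sub_pos.mpr ha
    positivity
  have hnum : HasDerivAt (fun b => (b - 1) * S) S a := by
    simpa using ((hasDerivAt_id a).sub_const 1).mul_const S
  have hden : HasDerivAt (fun b => b * K) K a := by
    simpa using (hasDerivAt_id a).mul_const K
  have hpow := (hnum.div hden (mul_ne_zero ha₀ hK.ne')).rpow (hasDerivAt_id a) hu
  have hfac : HasDerivAt (fun b => K / (b - 1)) (-K / (a - 1) ^ 2) a := by
    simpa [Pi.div_def] using (hasDerivAt_const a K).div ((hasDerivAt_id' a).sub_const 1) ha₁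
  refine (hfac.mul hpow).congr_deriv ?_
  simp only [Pi.div_apply, id, one_mul]
  rw [rpow_sub hu, rpow_one]
  unfold perpetualCallPremium
  field_simp
  ring

theorem callMoneyness_le_one {K S a : ℝ} (hK : 0 < K) (ha : 1 < a)
    (hS : S ≤ a * K / (a - 1)) : (a - 1) * S / (a * K) ≤ 1 := by
  have ha₁ : 0 < a - 1 := sub_pos.mpr ha
  rw [div_le_one (by positivity), ← le_div_iff₀' ha₁]
  exact hS

theorem perpetualCallPremium_nonneg {K S a : ℝ} (hK : 0 ≤ K) (hS : 0 ≤ S) (ha : 1 < a) :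
    0 ≤ perpetualCallPremium K S a := by
  have ha₁ : 0 < a - 1 := sub_pos.mpr ha
  unfold perpetualCallPremium
  positivity

noncomputable def callExponent (r σ q : ℝ) : ℝ :=
  √((r / σ ^ 2 + 1 / 2) ^ 2 + 2 * (r + q) / σ ^ 2) - r / σ ^ 2 + 1 / 2

section callExponent

variable {r σ q : ℝ}

theorem callExponent_radicand_pos (hσ : σ ≠ 0) (hrq : 0 < r + q) :
    0 < (r / σ ^ 2 + 1 / 2) ^ 2 + 2 * (r + q) / σ ^ 2 := by
  positivity

theorem one_lt_callExponent (hσ : σ ≠ 0) (hrq : 0 < r + q) : 1 < callExponent r σ q := by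
  unfold callExponent
  set A := r / σ ^ 2 + 1 / 2 with hA
  have hlt : A < √(A ^ 2 + 2 * (r + q) / σ ^ 2) :=
    calc A ≤ |A| := le_abs_self A
      _ = √(A ^ 2) := (sqrt_sq_eq_abs A).symm
      _ < √(A ^ 2 + 2 * (r + q) / σ ^ 2) :=
        sqrt_lt_sqrt (sq_nonneg A) (lt_add_of_pos_right _ (by positivity))
  linarith [hA]

theorem hasDerivAt_callExponent (hσ : σ ≠ 0) (hrq : 0 < r + q) :
    HasDerivAt (callExponent r σ)
      (1 / (σ ^ 2 * √((r / σ ^ 2 + 1 / 2) ^ 2 + 2 * (r + q) / σ ^ 2))) q := by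
  have hrad : HasDerivAt (fun q' => (r / σ ^ 2 + 1 / 2) ^ 2 + 2 * (r + q') / σ ^ 2)
      (2 / σ ^ 2) q := by
    simpa using ((((hasDerivAt_id q).const_add r).const_mul 2).div_const (σ ^ 2)).const_add
      ((r / σ ^ 2 + 1 / 2) ^ 2)
  refine (((hrad.sqrt (callExponent_radicand_pos hσ hrq).ne').sub_const _).add_const _).congr_deriv
    ?_
  have := (sqrt_pos.mpr (callExponent_radicand_pos hσ hrq)).ne'
  field_simp

end callExponent

/-- For 0 < S₀ ≤ S̄_C, the AmPO call premium C₀ is nonincreasing in the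
amortization rate q: ∂C₀/∂q = (C₀/(σ² ᾱ))·log((α_C−1)S₀/(α_C K)) ≤ 0. -/
theorem ampo_call_premium_deriv_q (r σ q K S₀ : ℝ) (hr : 0 ≤ r) (hσ : 0 < σ) (hq : 0 < q)
    (hK : 0 < K) (hS₀ : 0 < S₀)
    (αC : ℝ → ℝ)
    (hαC : ∀ q' : ℝ, αC q' =
      Real.sqrt ((r / σ ^ 2 + 1 / 2) ^ 2 + 2 * (r + q') / σ ^ 2) - r / σ ^ 2 + 1 / 2)
    (ᾱ : ℝ) (hᾱ : ᾱ = Real.sqrt ((r / σ ^ 2 + 1 / 2) ^ 2 + 2 * (r + q) / σ ^ 2))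
    (C₀ : ℝ → ℝ)
    (hC₀ : ∀ q' : ℝ, C₀ q' = K / (αC q' - 1) * ((αC q' - 1) * S₀ / (αC q' * K)) ^ (αC q'))
    (hcont : S₀ ≤ αC q * K / (αC q - 1)) :
    HasDerivAt C₀ (C₀ q / (σ ^ 2 * ᾱ) * Real.log ((αC q - 1) * S₀ / (αC q * K))) q ∧
      C₀ q / (σ ^ 2 * ᾱ) * Real.log ((αC q - 1) * S₀ / (αC q * K)) ≤ 0 := by
  have hrq : 0 < r + q := by linarith
  have hαC_eq : αC = callExponent r σ := funext hαC
  have hC₀_eq : C₀ = perpetualCallPremium K S₀ ∘ αC := funext hC₀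
  have hα₁ : 1 < αC q := hαC_eq ▸ one_lt_callExponent hσ.ne' hrq
  have hᾱ_pos : 0 < ᾱ := hᾱ ▸ sqrt_pos.mpr (callExponent_radicand_pos hσ.ne' hrq)
  have hC₀_nonneg : 0 ≤ C₀ q := hC₀_eq ▸ perpetualCallPremium_nonneg hK.le hS₀.le hα₁
  have hu : 0 ≤ (αC q - 1) * S₀ / (αC q * K) := by
    have : 0 < αC q - 1 := sub_pos.mpr hα₁
    positivity
  constructor
  · rw [hC₀_eq, hᾱ]
    exact ((hasDerivAt_perpetualCallPremium hK hS₀ hα₁).comp q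
      (hαC_eq ▸ hasDerivAt_callExponent hσ.ne' hrq)).congr_deriv
        (by rw [Function.comp_apply]; ring)
  · exact mul_nonpos_of_nonneg_of_nonpos (by positivity)
      (log_nonpos hu (callMoneyness_le_one hK hα₁ hcont))
end

section
/- For S₀ ≥ S̄_P, the AmPO put premium P₀ is nonincreasing in the amortization rate q; specifically, ∂P₀/∂q = −(P₀/(σ² ᾱ))·log((1+α_P)S₀/(α_P K)) ≤ 0. -/
/-!
As a function of the exponent, the premium is `f a = K/(1+a) · B(a)^a` with
`B(a) = aK/((1+a)S₀)`: the maximum over exercise boundaries `b` of `(K - b)(b/S₀)^a`,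
attained at `b = S̄_P`. By the envelope theorem `f'(a) = f(a) · log B(a)` (in the direct
computation the terms from the prefactor and from the base cancel). As `α_P'(q) = 1/(σ² ᾱ)`,
the chain rule gives the formula, and `S₀ ≥ S̄_P` is `B ≤ 1`, which fixes the sign.
-/

open Real

noncomputable def amPutExponent (r σ q : ℝ) : ℝ :=
  √((r / σ ^ 2 + 1 / 2) ^ 2 + 2 * (r + q) / σ ^ 2) + r / σ ^ 2 - 1 / 2

noncomputable def amPutPremium (K S a : ℝ) : ℝ :=
  K / (1 + a) * (a * K / ((1 + a) * S)) ^ a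

section Exponent

variable {r σ q : ℝ}

theorem amPutExponent_radicand_pos (hr : 0 ≤ r) (hq : 0 < q) (hσ : σ ≠ 0) :
    0 < (r / σ ^ 2 + 1 / 2) ^ 2 + 2 * (r + q) / σ ^ 2 := by
  have : 0 < r + q := by linarith
  positivity

theorem amPutExponent_pos (hr : 0 ≤ r) (hq : 0 < q) (hσ : σ ≠ 0) :
    0 < amPutExponent r σ q := by
  have hσ2 : 0 < σ ^ 2 := by positivity
  have ht : 0 ≤ r / σ ^ 2 := div_nonneg hr hσ2.le
  have hrq : 0 < 2 * (r + q) / σ ^ 2 := by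
    have : 0 < r + q := by linarith
    positivity
  -- `α_P > 0` amounts to `√(…) > 1/2 - r/σ²`, and the radicand exceeds `(1/2 - r/σ²)²`
  have hlt : 1 / 2 - r / σ ^ 2 < √((r / σ ^ 2 + 1 / 2) ^ 2 + 2 * (r + q) / σ ^ 2) :=
    calc 1 / 2 - r / σ ^ 2 ≤ |1 / 2 - r / σ ^ 2| := le_abs_self _
      _ = √((1 / 2 - r / σ ^ 2) ^ 2) := (sqrt_sq_eq_abs _).symm
      _ < _ := sqrt_lt_sqrt (sq_nonneg _) (by nlinarith)
  unfold amPutExponent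
  linarith

theorem hasDerivAt_amPutExponent (hσ : σ ≠ 0)
    (hrad : 0 < (r / σ ^ 2 + 1 / 2) ^ 2 + 2 * (r + q) / σ ^ 2) :
    HasDerivAt (amPutExponent r σ)
      (1 / (σ ^ 2 * √((r / σ ^ 2 + 1 / 2) ^ 2 + 2 * (r + q) / σ ^ 2))) q := by
  have hrad' : HasDerivAt (fun q' => (r / σ ^ 2 + 1 / 2) ^ 2 + 2 * (r + q') / σ ^ 2)
      (2 * 1 / σ ^ 2) q :=
    ((((hasDerivAt_id q).const_add r).const_mul 2).div_const (σ ^ 2)).const_add _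
  refine (((hrad'.sqrt hrad.ne').add_const (r / σ ^ 2)).sub_const (1 / 2)).congr_deriv ?_
  have : √((r / σ ^ 2 + 1 / 2) ^ 2 + 2 * (r + q) / σ ^ 2) ≠ 0 := by positivity
  field_simp

end Exponent

section Premium

variable {K S a : ℝ}

theorem amPutPremium_pos (hK : 0 < K) (ha : 0 < 1 + a) (hB : 0 < a * K / ((1 + a) * S)) :
    0 < amPutPremium K S a := by
  unfold amPutPremium
  positivity

theorem hasDerivAt_amPutPremium (hB : 0 < a * K / ((1 + a) * S)) :
    HasDerivAt (amPutPremium K S) (amPutPremium K S a * log (a * K / ((1 + a) * S))) a := by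
  have ha : a ≠ 0 := by rintro rfl; simp at hB
  have hK : K ≠ 0 := by rintro rfl; simp at hB
  have hS : S ≠ 0 := by rintro rfl; simp at hB
  have ha1 : 1 + a ≠ 0 := by intro h; simp [h] at hB
  have hshift : HasDerivAt (fun a' => 1 + a') 1 a := (hasDerivAt_id a).const_add 1
  have hbase : HasDerivAt (fun a' => a' * K / ((1 + a') * S))
      ((1 * K * ((1 + a) * S) - a * K * (1 * S)) / ((1 + a) * S) ^ 2) a :=
    ((hasDerivAt_id a).mul_const K).div (hshift.mul_const S) (by positivity)
  have hprefactor : HasDerivAt (fun a' => K / (1 + a')) ((0 * (1 + a) - K * 1) / (1 + a) ^ 2) a :=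
    (hasDerivAt_const a K).div hshift ha1
  refine (hprefactor.mul (hbase.rpow (hasDerivAt_id a) hB)).congr_deriv ?_
  unfold amPutPremium
  set B := a * K / ((1 + a) * S)
  rw [show B ^ (id a - 1) = B ^ a / B by rw [rpow_sub hB, rpow_one]; rfl]
  simp only [id, B]
  field_simp
  ring

theorem log_div_nonneg_of_le (hK : 0 < K) (ha : 0 < a) (hS : a * K / (1 + a) ≤ S) :
    0 ≤ log ((1 + a) * S / (a * K)) := by
  apply log_nonneg
  rw [one_le_div (by positivity)]
  rwa [div_le_iff₀ (by positivity), mul_comm S] at hS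

end Premium

/-- For S₀ ≥ S̄_P, the AmPO put premium P₀ is nonincreasing in the
amortization rate q: ∂P₀/∂q = −(P₀/(σ² ᾱ))·log((1+α_P)S₀/(α_P K)) ≤ 0. -/
theorem ampo_put_premium_deriv_q (r σ q K S₀ : ℝ) (hr : 0 ≤ r) (hσ : 0 < σ) (hq : 0 < q)
    (hK : 0 < K) (hS₀ : 0 < S₀)
    (αP : ℝ → ℝ)
    (hαP : ∀ q' : ℝ, αP q' =
      Real.sqrt ((r / σ ^ 2 + 1 / 2) ^ 2 + 2 * (r + q') / σ ^ 2) + r / σ ^ 2 - 1 / 2)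
    (ᾱ : ℝ) (hᾱ : ᾱ = Real.sqrt ((r / σ ^ 2 + 1 / 2) ^ 2 + 2 * (r + q) / σ ^ 2))
    (P₀ : ℝ → ℝ)
    (hP₀ : ∀ q' : ℝ, P₀ q' = K / (1 + αP q') * (αP q' * K / ((1 + αP q') * S₀)) ^ (αP q'))
    (hcont : αP q * K / (1 + αP q) ≤ S₀) :
    HasDerivAt P₀ (-(P₀ q / (σ ^ 2 * ᾱ)) * Real.log ((1 + αP q) * S₀ / (αP q * K))) q ∧
      -(P₀ q / (σ ^ 2 * ᾱ)) * Real.log ((1 + αP q) * S₀ / (αP q * K)) ≤ 0 := by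
  obtain rfl : αP = amPutExponent r σ := funext hαP
  obtain rfl : P₀ = amPutPremium K S₀ ∘ amPutExponent r σ := funext hP₀
  have hrad := amPutExponent_radicand_pos hr hq hσ.ne'
  have hα := amPutExponent_pos hr hq hσ.ne'
  set a := amPutExponent r σ q
  have hB : 0 < a * K / ((1 + a) * S₀) := by positivity
  have hᾱpos : 0 < ᾱ := hᾱ ▸ sqrt_pos.2 hrad
  have hlog : log ((1 + a) * S₀ / (a * K)) = -log (a * K / ((1 + a) * S₀)) := by
    rw [← log_inv, inv_div]
  refine ⟨?_, ?_⟩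
  · refine ((hasDerivAt_amPutPremium hB).comp q
      (hasDerivAt_amPutExponent hσ.ne' hrad)).congr_deriv ?_
    rw [hlog, ← hᾱ, Function.comp_apply]
    ring
  · have hP : 0 < (amPutPremium K S₀ ∘ amPutExponent r σ) q :=
      amPutPremium_pos hK (by linarith) hB
    exact mul_nonpos_of_nonpos_of_nonneg (neg_nonpos.2 (by positivity))
      (log_div_nonneg_of_le hK hα hcont)
end

section
/- The put exercise boundary S̄_P(q) = α_P(q)K/(1+α_P(q)) is strictly increasing in q with derivative ∂S̄_P/∂q = K/(σ²(1+α_P)² ᾱ) > 0, and S̄_P(q) → K as q → ∞. -/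
/-!
Writing `S̄_P = K - K / (1 + α_P)`, the map `α ↦ α K / (1 + α)` has derivative `K / (1 + α)²`
and tends to `K` as `α → ∞`, while `α_P = ᾱ + r/σ² - 1/2` grows like a square root of an affine
function of `q` with `α_P' = 1 / (σ² ᾱ)`; the chain rule gives the derivative, and its positivity
gives strict monotonicity.
-/

open Filter Topology

noncomputable def alphaBar (r σ q : ℝ) : ℝ :=
  Real.sqrt ((r / σ ^ 2 + 1 / 2) ^ 2 + 2 * (r + q) / σ ^ 2)

noncomputable def alphaP (r σ q : ℝ) : ℝ :=
  alphaBar r σ q + r / σ ^ 2 - 1 / 2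

lemma HasDerivAt.mul_const_div_one_add {u : ℝ → ℝ} {u' x : ℝ} (K : ℝ) (hu : HasDerivAt u u' x)
    (hx : 1 + u x ≠ 0) :
    HasDerivAt (fun y => u y * K / (1 + u y)) (K * u' / (1 + u x) ^ 2) x := by
  refine ((hu.mul_const K).fun_div (hu.const_add 1) hx).congr_deriv ?_
  ring

lemma tendsto_mul_const_div_one_add {α : Type*} {l : Filter α} {u : α → ℝ} (K : ℝ)
    (hu : Tendsto u l atTop) : Tendsto (fun y => u y * K / (1 + u y)) l (𝓝 K) := by
  have hden : Tendsto (fun y => 1 + u y) l atTop := tendsto_atTop_add_const_left l 1 hu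
  have hlim : Tendsto (fun y => K - K / (1 + u y)) l (𝓝 (K - 0)) :=
    tendsto_const_nhds.sub (tendsto_const_nhds.div_atTop hden)
  rw [sub_zero] at hlim
  refine hlim.congr' ?_
  filter_upwards [hden.eventually_gt_atTop 0] with y hy
  field_simp
  ring

section

variable {r σ : ℝ}

lemma alphaBar_pos (hr : 0 ≤ r) {q : ℝ} (hq : 0 ≤ q) : 0 < alphaBar r σ q :=
  Real.sqrt_pos.mpr (by positivity)

lemma one_add_alphaP_pos (hr : 0 ≤ r) (q : ℝ) : 0 < 1 + alphaP r σ q := by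
  have : 0 ≤ alphaBar r σ q := Real.sqrt_nonneg _
  have : 0 ≤ r / σ ^ 2 := by positivity
  unfold alphaP
  linarith

lemma hasDerivAt_alphaP (hσ : σ ≠ 0) {q : ℝ} (hpos : 0 < alphaBar r σ q) :
    HasDerivAt (alphaP r σ) (1 / (σ ^ 2 * alphaBar r σ q)) q := by
  have hrad : HasDerivAt (fun y => (r / σ ^ 2 + 1 / 2) ^ 2 + 2 * (r + y) / σ ^ 2)
      (2 / σ ^ 2) q := by
    simpa using ((((hasDerivAt_id q).const_add r).const_mul 2).div_const (σ ^ 2)).const_add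
      ((r / σ ^ 2 + 1 / 2) ^ 2)
  have hbar := (Real.hasDerivAt_sqrt (Real.sqrt_pos.mp hpos).ne').comp q hrad
  refine ((hbar.add_const (r / σ ^ 2)).sub_const (1 / 2)).congr_deriv ?_
  unfold alphaBar at hpos ⊢
  field_simp

lemma tendsto_alphaP_atTop (hσ : σ ≠ 0) : Tendsto (alphaP r σ) atTop atTop := by
  have hrad : Tendsto (fun y => (r / σ ^ 2 + 1 / 2) ^ 2 + 2 * (r + y) / σ ^ 2) atTop atTop :=
    tendsto_atTop_add_const_left _ _ <|
      ((tendsto_atTop_add_const_left _ r tendsto_id).const_mul_atTop two_pos).atTop_div_const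
        (by positivity)
  exact tendsto_atTop_add_const_right _ _ <|
    tendsto_atTop_add_const_right _ _ (Real.tendsto_sqrt_atTop.comp hrad)

end

/-- The put exercise boundary S̄_P(q) = α_P(q)K/(1+α_P(q)) is strictly
increasing in q with ∂S̄_P/∂q = K/(σ²(1+α_P)² ᾱ) > 0, and S̄_P(q) → K as q → ∞. -/
theorem ampo_put_boundary_increasing (r σ q K : ℝ) (hr : 0 ≤ r) (hσ : 0 < σ) (hq : 0 < q)
    (hK : 0 < K)
    (αP : ℝ → ℝ)
    (hαP : ∀ q' : ℝ, αP q' =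
      Real.sqrt ((r / σ ^ 2 + 1 / 2) ^ 2 + 2 * (r + q') / σ ^ 2) + r / σ ^ 2 - 1 / 2)
    (ᾱ : ℝ) (hᾱ : ᾱ = Real.sqrt ((r / σ ^ 2 + 1 / 2) ^ 2 + 2 * (r + q) / σ ^ 2))
    (SP : ℝ → ℝ) (hSP : ∀ q' : ℝ, SP q' = αP q' * K / (1 + αP q')) :
    HasDerivAt SP (K / (σ ^ 2 * (1 + αP q) ^ 2 * ᾱ)) q ∧
      0 < K / (σ ^ 2 * (1 + αP q) ^ 2 * ᾱ) ∧
      StrictMonoOn SP (Set.Ioi 0) ∧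
      Filter.Tendsto SP Filter.atTop (nhds K) := by
  obtain rfl : αP = alphaP r σ := funext hαP
  obtain rfl : SP = fun y => alphaP r σ y * K / (1 + alphaP r σ y) := funext hSP
  subst hᾱ
  set S' : ℝ → ℝ := fun x => K / (σ ^ 2 * (1 + alphaP r σ x) ^ 2 * alphaBar r σ x)
  have hderiv : ∀ x ∈ Set.Ioi (0 : ℝ), HasDerivAt _ (S' x) x := fun x hx =>
    ((hasDerivAt_alphaP hσ.ne' (alphaBar_pos hr hx.le)).mul_const_div_one_add K
      (one_add_alphaP_pos hr x).ne').congr_deriv (by simp only [S']; field_simp)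
  have hS'_pos : ∀ x ∈ Set.Ioi (0 : ℝ), 0 < S' x := fun x hx => by
    have := alphaBar_pos (σ := σ) hr hx.le
    have := one_add_alphaP_pos (σ := σ) hr x
    positivity
  refine ⟨hderiv q hq, hS'_pos q hq, ?_,
    tendsto_mul_const_div_one_add K (tendsto_alphaP_atTop hσ.ne')⟩
  refine strictMonoOn_of_hasDerivWithinAt_pos (f' := S') (convex_Ioi 0)
    (fun x hx => (hderiv x hx).continuousAt.continuousWithinAt) ?_ ?_ <;> rw [interior_Ioi]
  exacts [fun x hx => (hderiv x hx).hasDerivWithinAt, hS'_pos]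
end
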